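/- For n ≡ 0 (mod 4), the monoid AM_n has rank n/2 + 1, i.e., the set {h, x_n, x_{n−1}, ..., x_{n/2+3}, x_{n/2+2}x_{n/2}⋯x_6x_4, x_{n/2+1}x_{n/2−1}⋯x_5x_3} of size n/2+1 generates AM_n, and no smaller set does. -/

import Mathlib

/-- Partial transformations on `Fin n`, represented as `Option`-valued maps. -/
abbrev PT (n : ℕ) := Fin n → Option (Fin n)

/-- Left-to-right composition of partial maps: `x (pcomp f g) = (x f) g`. -/
def pcomp {n : ℕ} (f g : PT n) : PT n := fun x => (f x).bind g

/-- The identity partial map. -/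
def pid (n : ℕ) : PT n := fun x => some x

instance PTMonoid (n : ℕ) : Monoid (PT n) where
  mul := pcomp
  one := pid n
  mul_assoc f g h := funext fun x => by
    show ((f x).bind g).bind h = (f x).bind fun y => (g y).bind h
    cases f x <;> rfl
  one_mul f := rfl
  mul_one f := funext fun x => by
    show (f x).bind (fun y => some y) = f x
    cases f x <;> rfl

/-- `f` is injective on its domain. -/
def pInj {n : ℕ} (f : PT n) : Prop := ∀ x y a, f x = some a → f y = some a → x = y

/-- The domain of a partial map. -/
def pDom {n : ℕ} (f : PT n) : Finset (Fin n) := Finset.univ.filter fun x => (f x).isSome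

/-- The image of a partial map. -/
def pIm {n : ℕ} (f : PT n) : Finset (Fin n) := Finset.univ.filter fun b => ∃ x, f x = some b

/-- The rank of a partial map is the size of its domain. -/
def prank {n : ℕ} (f : PT n) : ℕ := (pDom f).card

/-- Order-preserving partial maps. -/
def orderPres {n : ℕ} (f : PT n) : Prop :=
  ∀ x y a b, f x = some a → f y = some b → x ≤ y → a ≤ b

/-- Order-reversing partial maps. -/
def orderRev {n : ℕ} (f : PT n) : Prop :=
  ∀ x y a b, f x = some a → f y = some b → x ≤ y → b ≤ a

/-- Monotone partial maps. -/
def isMonotonePT {n : ℕ} (f : PT n) : Prop := orderPres f ∨ orderRev f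

/-- The permutation `σ` extends the partial map `f`. -/
def extendsTo {n : ℕ} (σ : Equiv.Perm (Fin n)) (f : PT n) : Prop :=
  ∀ x a, f x = some a → σ x = a

/-- Membership in the alternating inverse monoid `AI_n`: an injective partial map of
rank `≤ n - 2`, or one that extends to an even permutation. -/
def inAI {n : ℕ} (f : PT n) : Prop :=
  pInj f ∧ (prank f + 2 ≤ n ∨
    ∃ σ : Equiv.Perm (Fin n), σ ∈ alternatingGroup (Fin n) ∧ extendsTo σ f)

/-- `AO_n = AI_n ∩ POI_n`. -/
def AO (n : ℕ) : Set (PT n) := {f | orderPres f ∧ inAI f}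

/-- `AM_n = AI_n ∩ PMI_n`. -/
def AM (n : ℕ) : Set (PT n) := {f | isMonotonePT f ∧ inAI f}

/-- Green's `J`-relation relative to a submonoid-like subset `S` (containing the identity):
`a J b` iff each lies in the two-sided principal ideal of the other. -/
def JRelIn {n : ℕ} (S : Set (PT n)) (a b : PT n) : Prop :=
  (∃ u v, u ∈ S ∧ v ∈ S ∧ a = u * b * v) ∧ (∃ u v, u ∈ S ∧ v ∈ S ∧ b = u * a * v)

/-- The (unique) order-preserving bijection from `Fin n \ {i}` onto `Fin n \ {j}`. -/
def opBij {n : ℕ} (i j : Fin n) : PT n := fun x =>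
  if hx : x = i then none
  else if hlt : x.val < i.val then
    (if hp : x.val < j.val then some ⟨x.val, lt_trans hp j.isLt⟩
     else some ⟨x.val + 1, by have := i.isLt; omega⟩)
  else
    (if hp : x.val - 1 < j.val then some ⟨x.val - 1, lt_trans hp j.isLt⟩
     else some ⟨x.val, x.isLt⟩)

/-- The generators `x_1, …, x_n` of `AO_n` (indexed 1-based by `i`):
`x_1 : X_1 → X_n` (`n` odd) or `X_1 → X_{n-1}` (`n` even); `x_2 : X_2 → X_{n-1}` (`n` odd)
or `X_2 → X_n` (`n` even); `x_i : X_i → X_{i-2}` for `3 ≤ i ≤ n`. -/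
def xg (n : ℕ) (hn : 2 ≤ n) (i : ℕ) : PT n :=
  if h3 : 3 ≤ i ∧ i ≤ n then opBij ⟨i - 1, by omega⟩ ⟨i - 3, by omega⟩
  else if i = 1 then
    opBij ⟨0, by omega⟩ (if n % 2 = 1 then ⟨n - 1, by omega⟩ else ⟨n - 2, by omega⟩)
  else
    opBij ⟨1, by omega⟩ (if n % 2 = 1 then ⟨n - 2, by omega⟩ else ⟨n - 1, by omega⟩)

/-- The generating set `{x_1, …, x_n}` of `AO_n`. -/
def AOgens (n : ℕ) (hn : 2 ≤ n) : Set (PT n) :=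
  {f | ∃ i : ℕ, 1 ≤ i ∧ i ≤ n ∧ f = xg n hn i}

/-- The order-reversing permutation `k ↦ n + 1 - k` as a partial map. -/
def hPT (n : ℕ) : PT n := fun x => some x.rev

/-- The descending product `x_{base+2(m-1)} x_{base+2(m-2)} ⋯ x_{base+2} x_base`
(left-to-right composition). -/
def descChain (n : ℕ) (hn : 2 ≤ n) (base m : ℕ) : PT n :=
  (((List.range m).map fun t => xg n hn (base + 2 * t)).reverse).prod

/-- The candidate generating set
`{h, x_n, …, x_{n/2+3}, x_{n/2+2} x_{n/2} ⋯ x_6 x_4, x_{n/2+1} x_{n/2-1} ⋯ x_5 x_3}`. -/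
def AMgens0 (n : ℕ) (hn : 2 ≤ n) : Set (PT n) :=
  {f | f = hPT n ∨ (∃ i : ℕ, n / 2 + 3 ≤ i ∧ i ≤ n ∧ f = xg n hn i) ∨
       f = descChain n hn 4 (n / 4) ∨ f = descChain n hn 3 (n / 4)}

/-!
An order-preserving partial injection is determined by its domain and image
(`IsOrderIsoOn.unique`). So an order-preserving element of `AM_n` is `1`, or has rank `≤ n - 2`,
or is the order-preserving bijection `opBij i j : X_i → X_j`; the latter extends to the permutation
`(cycleRange j)⁻¹ * cycleRange i` of sign `(-1)^(i+j)`, so it lies in `AM_n` iff `i ≡ j (mod 2)`.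
Every other element of `AM_n` is `h` times an order-preserving one.

Generation. As `opBij i k * opBij k j = opBij i j`, it suffices to join the points of each parity
by a cycle of generators: the `x_i` with `i ≥ n/2 + 3` move points of the upper half down by `2`,
their conjugates by `h` move points of the lower half up by `2`, and the two long products (and
their conjugates) jump between the halves. Partial identities are products of the `opBij i i`, and
a map of rank `≤ n - 2` from `A` onto `B` is reached by induction on `∑ A + ∑ B`: restrictions of
`opBij j (j + 2)` or `opBij (j + 2) j` slide a point of `A` or of `B` down until both are initial
segments.

Minimality. Ranks do not increase along products and the only elements of rank `n` are `1` and
`h`, so `h` is a generator. A factorisation of the partial identity on `X_i` has a first factor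
other than `1` and `h`, and its domain is `X_i` or `X_{n+1-i}`; so for each `i ≤ n/2` there is a
generator of rank `n - 1` with one of these domains.
-/

section

variable {n : ℕ}

section Basic

variable {f g : PT n}

theorem pmul_apply (f g : PT n) (x : Fin n) : (f * g) x = (f x).bind g := rfl

theorem pmul_eq_some {x b : Fin n} : (f * g) x = some b ↔ ∃ m, f x = some m ∧ g m = some b := by
  rw [pmul_apply]; cases f x <;> simp

theorem mem_pDom {x : Fin n} : x ∈ pDom f ↔ ∃ a, f x = some a := by
  simp [pDom, Option.isSome_iff_exists]

theorem mem_pIm {b : Fin n} : b ∈ pIm f ↔ ∃ x, f x = some b := by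
  simp [pIm]

theorem notMem_pDom {x : Fin n} : x ∉ pDom f ↔ f x = none := by
  simp [pDom]

theorem pIm_eq_image : pIm f = (pDom f).image fun x => (f x).getD x := by
  ext b
  simp only [mem_pIm, Finset.mem_image, mem_pDom]
  constructor
  · rintro ⟨x, hx⟩
    exact ⟨x, ⟨b, hx⟩, by simp [hx]⟩
  · rintro ⟨x, ⟨a, ha⟩, rfl⟩
    exact ⟨x, by simp [ha]⟩

theorem pInj.injOn_getD (hf : pInj f) : Set.InjOn (fun x => (f x).getD x) (pDom f) := by
  intro x hx y hy hxy
  obtain ⟨a, ha⟩ := mem_pDom.1 hx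
  obtain ⟨b, hb⟩ := mem_pDom.1 hy
  simp only [ha, hb, Option.getD_some] at hxy
  exact hf x y a ha (hxy ▸ hb)

theorem pInj.mul (hf : pInj f) (hg : pInj g) : pInj (f * g) := by
  intro x y a hx hy
  obtain ⟨m, hm, ha⟩ := pmul_eq_some.1 hx
  obtain ⟨m', hm', ha'⟩ := pmul_eq_some.1 hy
  exact hf x y m hm (hg m m' a ha ha' ▸ hm')

theorem orderPres.mul (hf : orderPres f) (hg : orderPres g) : orderPres (f * g) := by
  intro x y a b hx hy hxy
  obtain ⟨m, hm, ha⟩ := pmul_eq_some.1 hx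
  obtain ⟨m', hm', hb⟩ := pmul_eq_some.1 hy
  exact hg m m' a b ha hb (hf x y m m' hm hm' hxy)

theorem orderPres.mul_orderRev (hf : orderPres f) (hg : orderRev g) : orderRev (f * g) := by
  intro x y a b hx hy hxy
  obtain ⟨m, hm, ha⟩ := pmul_eq_some.1 hx
  obtain ⟨m', hm', hb⟩ := pmul_eq_some.1 hy
  exact hg m m' a b ha hb (hf x y m m' hm hm' hxy)

theorem orderRev.mul_orderPres (hf : orderRev f) (hg : orderPres g) : orderRev (f * g) := by
  intro x y a b hx hy hxy
  obtain ⟨m, hm, ha⟩ := pmul_eq_some.1 hx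
  obtain ⟨m', hm', hb⟩ := pmul_eq_some.1 hy
  exact hg m' m b a hb ha (hf x y m m' hm hm' hxy)

theorem orderRev.mul (hf : orderRev f) (hg : orderRev g) : orderPres (f * g) := by
  intro x y a b hx hy hxy
  obtain ⟨m, hm, ha⟩ := pmul_eq_some.1 hx
  obtain ⟨m', hm', hb⟩ := pmul_eq_some.1 hy
  exact hg m' m b a hb ha (hf x y m m' hm hm' hxy)

theorem isMonotonePT.mul (hf : isMonotonePT f) (hg : isMonotonePT g) : isMonotonePT (f * g) := by
  rcases hf with (hf : orderPres f) | (hf : orderRev f) <;>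
    rcases hg with (hg : orderPres g) | (hg : orderRev g)
  exacts [.inl (hf.mul hg), .inr (hf.mul_orderRev hg), .inr (hf.mul_orderPres hg), .inl (hf.mul hg)]

theorem pDom_mul_subset (f g : PT n) : pDom (f * g) ⊆ pDom f := by
  intro x hx
  obtain ⟨b, hb⟩ := mem_pDom.1 hx
  obtain ⟨m, hm, -⟩ := pmul_eq_some.1 hb
  exact mem_pDom.2 ⟨m, hm⟩

theorem prank_le (f : PT n) : prank f ≤ n :=
  (Finset.card_le_univ _).trans_eq (Fintype.card_fin n)

theorem prank_mul_le_left (f g : PT n) : prank (f * g) ≤ prank f :=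
  Finset.card_le_card (pDom_mul_subset f g)

theorem prank_mul_le_right (hf : pInj f) (g : PT n) : prank (f * g) ≤ prank g := by
  refine Finset.card_le_card_of_injOn (fun x => (f x).getD x) (fun x hx => ?_)
    (hf.injOn_getD.mono (pDom_mul_subset f g))
  obtain ⟨b, hb⟩ := mem_pDom.1 hx
  obtain ⟨m, hm, hmb⟩ := pmul_eq_some.1 hb
  simpa [hm] using mem_pDom.2 ⟨b, hmb⟩

end Basic

theorem Finset.eq_of_isLowerSet_of_card_eq {α : Type*} [LinearOrder α] {s t : Finset α}
    (hs : IsLowerSet (s : Set α)) (ht : IsLowerSet (t : Set α)) (h : s.card = t.card) : s = t := by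
  rcases hs.total ht with hst | hts
  · exact Finset.eq_of_subset_of_card_le (Finset.coe_subset.1 hst) h.ge
  · exact (Finset.eq_of_subset_of_card_le (Finset.coe_subset.1 hts) h.le).symm

section OrderIso

variable {f g : PT n} {A B C : Finset (Fin n)}

structure IsOrderIsoOn (f : PT n) (A B : Finset (Fin n)) : Prop where
  mono : orderPres f
  inj : pInj f
  dom : pDom f = A
  im : pIm f = B

theorem IsOrderIsoOn.mul (hf : IsOrderIsoOn f A B) (hg : IsOrderIsoOn g B C) :
    IsOrderIsoOn (f * g) A C where
  mono := hf.mono.mul hg.mono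
  inj := hf.inj.mul hg.inj
  dom := by
    refine Finset.Subset.antisymm (hf.dom ▸ pDom_mul_subset f g) fun x hx => ?_
    obtain ⟨m, hm⟩ := mem_pDom.1 (hf.dom ▸ hx)
    obtain ⟨b, hb⟩ := mem_pDom.1 (hg.dom ▸ hf.im ▸ mem_pIm.2 ⟨x, hm⟩ : m ∈ pDom g)
    exact mem_pDom.2 ⟨b, pmul_eq_some.2 ⟨m, hm, hb⟩⟩
  im := by
    ext b
    rw [← hg.im, mem_pIm, mem_pIm]
    constructor
    · rintro ⟨x, hx⟩
      obtain ⟨m, -, hb⟩ := pmul_eq_some.1 hx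
      exact ⟨m, hb⟩
    · rintro ⟨m, hb⟩
      obtain ⟨x, hx⟩ := mem_pIm.1 (hf.im ▸ hg.dom ▸ mem_pDom.2 ⟨b, hb⟩ : m ∈ pIm f)
      exact ⟨x, pmul_eq_some.2 ⟨m, hx, hb⟩⟩

theorem IsOrderIsoOn.card_eq (hf : IsOrderIsoOn f A B) : A.card = B.card := by
  rw [← hf.dom, ← hf.im, pIm_eq_image, Finset.card_image_of_injOn hf.inj.injOn_getD]

theorem IsOrderIsoOn.strictMono (hf : IsOrderIsoOn f A B) :
    StrictMono fun x : A => (f x).getD x := by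
  intro x y hxy
  obtain ⟨a, ha⟩ := mem_pDom.1 (hf.dom ▸ x.2 : (x : Fin n) ∈ pDom f)
  obtain ⟨b, hb⟩ := mem_pDom.1 (hf.dom ▸ y.2 : (y : Fin n) ∈ pDom f)
  simp only [ha, hb, Option.getD_some]
  refine lt_of_le_of_ne (hf.mono _ _ a b ha hb hxy.le) fun hab => hxy.ne ?_
  exact Subtype.ext (hf.inj _ _ a ha (hab ▸ hb))

theorem IsOrderIsoOn.range_eq (hf : IsOrderIsoOn f A B) :
    Set.range (fun x : A => (f x).getD x) = B := by
  rw [← hf.im, pIm_eq_image, hf.dom, Finset.coe_image]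
  ext b
  simp

theorem IsOrderIsoOn.unique (hf : IsOrderIsoOn f A B) (hg : IsOrderIsoOn g A B) : f = g := by
  have hfg := (hf.strictMono.range_inj hg.strictMono).1 (hf.range_eq.trans hg.range_eq.symm)
  funext x
  by_cases hx : x ∈ A
  · obtain ⟨a, ha⟩ := mem_pDom.1 (hf.dom ▸ hx)
    obtain ⟨b, hb⟩ := mem_pDom.1 (hg.dom ▸ hx)
    simpa [ha, hb] using congrFun hfg ⟨x, hx⟩
  · rw [(notMem_pDom (f := f)).1 (hf.dom ▸ hx), (notMem_pDom (f := g)).1 (hg.dom ▸ hx)]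

end OrderIso

def pidOn (A : Finset (Fin n)) : PT n := fun x => if x ∈ A then some x else none

section PartialIdentity

variable {f : PT n} {A B : Finset (Fin n)}

theorem pidOn_eq_some {x a : Fin n} : pidOn A x = some a ↔ x ∈ A ∧ x = a := by
  unfold pidOn; split_ifs with h <;> simp [h]

theorem isOrderIsoOn_pidOn (A : Finset (Fin n)) : IsOrderIsoOn (pidOn A) A A where
  mono x y a b hx hy hxy := by
    rw [← (pidOn_eq_some.1 hx).2, ← (pidOn_eq_some.1 hy).2]; exact hxy
  inj x y a hx hy := (pidOn_eq_some.1 hx).2.trans (pidOn_eq_some.1 hy).2.symm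
  dom := by ext x; simp [mem_pDom, pidOn_eq_some]
  im := by ext x; simp [mem_pIm, pidOn_eq_some]

theorem pidOn_univ : pidOn (Finset.univ : Finset (Fin n)) = 1 := by
  funext x; simp [pidOn]; rfl

theorem pidOn_inter (A B : Finset (Fin n)) : pidOn (A ∩ B) = pidOn A * pidOn B := by
  funext x
  by_cases hA : x ∈ A <;> by_cases hB : x ∈ B <;> simp [pmul_apply, pidOn, hA, hB]

theorem pDom_pidOn_mul (A : Finset (Fin n)) (f : PT n) : pDom (pidOn A * f) = A ∩ pDom f := by
  ext x
  by_cases hA : x ∈ A <;> simp [mem_pDom, pmul_apply, pidOn, hA]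

theorem pIm_mul_pidOn (f : PT n) (B : Finset (Fin n)) : pIm (f * pidOn B) = pIm f ∩ B := by
  ext b
  simp only [mem_pIm, pmul_eq_some, pidOn_eq_some, Finset.mem_inter]
  constructor
  · rintro ⟨x, m, hm, hmB, rfl⟩
    exact ⟨⟨x, hm⟩, hmB⟩
  · rintro ⟨⟨x, hx⟩, hb⟩
    exact ⟨x, b, hx, hb, rfl⟩

end PartialIdentity

def opBijVal (i j x : ℕ) : ℕ :=
  if x < i then (if x < j then x else x + 1) else (if x - 1 < j then x - 1 else x)

section OpBij

theorem opBijVal_lt {i j x : ℕ} (hi : i < n) (hj : j < n) (hx : x < n) : opBijVal i j x < n := by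
  unfold opBijVal; split_ifs <;> omega

theorem opBijVal_ne {i j x : ℕ} (hx : x ≠ i) : opBijVal i j x ≠ j := by
  unfold opBijVal; split_ifs <;> omega

theorem opBijVal_opBijVal {i j x : ℕ} (hx : x ≠ j) : opBijVal i j (opBijVal j i x) = x := by
  unfold opBijVal; split_ifs <;> omega

theorem opBij_apply (i j x : Fin n) :
    opBij i j x =
      if x = i then none else some ⟨opBijVal i j x, opBijVal_lt i.isLt j.isLt x.isLt⟩ := by
  unfold opBij opBijVal
  split_ifs <;> rfl

theorem opBij_eq_some {i j x a : Fin n} :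
    opBij i j x = some a ↔ x ≠ i ∧ (a : ℕ) = opBijVal i j x := by
  rw [opBij_apply]
  split_ifs with h
  · simp [h]
  · simp only [Option.some.injEq, Fin.ext_iff, h, ne_eq, not_false_eq_true, true_and, eq_comm]

theorem isOrderIsoOn_opBij (i j : Fin n) :
    IsOrderIsoOn (opBij i j) (Finset.univ.erase i) (Finset.univ.erase j) where
  mono x y a b hx hy hxy := by
    rw [opBij_eq_some, ne_eq, Fin.ext_iff] at hx hy
    rw [Fin.le_iff_val_le_val] at hxy ⊢
    unfold opBijVal at hx hy
    split_ifs at hx hy <;> omega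
  inj x y a hx hy := by
    rw [opBij_eq_some, ne_eq, Fin.ext_iff] at hx hy
    rw [Fin.ext_iff]
    unfold opBijVal at hx hy
    split_ifs at hx hy <;> omega
  dom := by
    ext x
    simp only [mem_pDom, opBij_apply, Finset.mem_erase, Finset.mem_univ, and_true]
    split_ifs with h <;> simp [h]
  im := by
    ext b
    simp only [mem_pIm, opBij_eq_some, Finset.mem_erase, Finset.mem_univ, and_true, ne_eq,
      Fin.ext_iff]
    constructor
    · rintro ⟨x, hx, hb⟩
      exact hb ▸ opBijVal_ne hx
    · intro hb
      exact ⟨⟨opBijVal j i b, opBijVal_lt j.isLt i.isLt b.isLt⟩, opBijVal_ne hb,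
        (opBijVal_opBijVal hb).symm⟩

theorem opBij_mul_opBij (i k j : Fin n) : opBij i k * opBij k j = opBij i j :=
  ((isOrderIsoOn_opBij i k).mul (isOrderIsoOn_opBij k j)).unique (isOrderIsoOn_opBij i j)

theorem opBij_self (i : Fin n) : opBij i i = pidOn (Finset.univ.erase i) :=
  (isOrderIsoOn_opBij i i).unique (isOrderIsoOn_pidOn _)

theorem prank_opBij (i j : Fin n) : prank (opBij i j) = n - 1 := by
  simp [prank, (isOrderIsoOn_opBij i j).dom]

end OpBij

section Reversal

variable {f : PT n}

theorem hPT_mul_apply (f : PT n) (x : Fin n) : (hPT n * f) x = f x.rev := rfl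

theorem pmul_hPT_eq_some {x b : Fin n} : (f * hPT n) x = some b ↔ f x = some b.rev := by
  rw [pmul_apply]
  cases f x with
  | none => simp
  | some a =>
    simp only [Option.bind_some, hPT, Option.some.injEq, eq_comm (b := b.rev), Fin.rev_eq_iff]

theorem hPT_mul_hPT : hPT n * hPT n = 1 := by
  funext x; simp [hPT_mul_apply, hPT]; rfl

theorem pInj_hPT : pInj (hPT n) := by
  intro x y a hx hy
  simp only [hPT, Option.some.injEq] at hx hy
  exact Fin.rev_injective (hx.trans hy.symm)

theorem orderRev_hPT : orderRev (hPT n) := by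
  intro x y a b hx hy hxy
  simp only [hPT, Option.some.injEq] at hx hy
  exact hx ▸ hy ▸ Fin.rev_le_rev.2 hxy

theorem mem_pDom_hPT_mul {x : Fin n} : x ∈ pDom (hPT n * f) ↔ x.rev ∈ pDom f := by
  simp [mem_pDom, hPT_mul_apply]

theorem pIm_hPT_mul (f : PT n) : pIm (hPT n * f) = pIm f := by
  ext b
  simp only [mem_pIm, hPT_mul_apply]
  exact ⟨fun ⟨x, hx⟩ => ⟨x.rev, hx⟩, fun ⟨x, hx⟩ => ⟨x.rev, by rwa [Fin.rev_rev]⟩⟩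

theorem pDom_mul_hPT (f : PT n) : pDom (f * hPT n) = pDom f := by
  ext x
  simp only [mem_pDom, pmul_hPT_eq_some]
  exact ⟨fun ⟨b, hb⟩ => ⟨b.rev, hb⟩, fun ⟨b, hb⟩ => ⟨b.rev, by rwa [Fin.rev_rev]⟩⟩

theorem mem_pIm_mul_hPT {b : Fin n} : b ∈ pIm (f * hPT n) ↔ b.rev ∈ pIm f := by
  simp [mem_pIm, pmul_hPT_eq_some]

theorem prank_hPT_mul (f : PT n) : prank (hPT n * f) = prank f := by
  refine Finset.card_nbij' Fin.rev Fin.rev (fun x hx => ?_) (fun x hx => ?_)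
    (fun x _ => Fin.rev_rev x) (fun x _ => Fin.rev_rev x)
  · exact mem_pDom_hPT_mul.1 hx
  · exact mem_pDom_hPT_mul.2 (by rwa [Fin.rev_rev])

theorem pDom_one : pDom (1 : PT n) = Finset.univ :=
  Finset.eq_univ_of_forall fun x => mem_pDom.2 ⟨x, rfl⟩

theorem prank_hPT : prank (hPT n) = n := by
  rw [← mul_one (hPT n), prank_hPT_mul, prank, pDom_one, Finset.card_univ, Fintype.card_fin]

theorem hPT_mul_opBij_mul_hPT (i j : Fin n) : hPT n * opBij i j * hPT n = opBij i.rev j.rev := by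
  have h := isOrderIsoOn_opBij i j
  refine IsOrderIsoOn.unique ⟨(orderRev_hPT.mul_orderPres h.mono).mul orderRev_hPT,
    (pInj_hPT.mul h.inj).mul pInj_hPT, ?_, ?_⟩ (isOrderIsoOn_opBij i.rev j.rev)
  · ext x
    simp [pDom_mul_hPT, mem_pDom_hPT_mul, h.dom, Fin.rev_eq_iff]
  · ext b
    simp [mem_pIm_mul_hPT, pIm_hPT_mul, h.im, Fin.rev_eq_iff]

theorem hPT_ne_one (hn : 2 ≤ n) : hPT n ≠ 1 := by
  intro h
  have h0 : (⟨0, by omega⟩ : Fin n).rev = ⟨0, by omega⟩ := Option.some.inj (congrFun h _)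
  rw [Fin.ext_iff, Fin.val_rev] at h0
  simp only at h0
  omega

end Reversal

section Alternating

open Equiv

def AMSubmonoid (n : ℕ) : Submonoid (PT n) where
  carrier := AM n
  mul_mem' := by
    rintro f g ⟨hfm, hfi, hfa⟩ ⟨hgm, hgi, hga⟩
    refine ⟨hfm.mul hgm, hfi.mul hgi, or_iff_not_imp_left.2 fun hr => ?_⟩
    have := prank_mul_le_left f g
    have := prank_mul_le_right hfi g
    obtain ⟨σ, hσ, hσf⟩ := hfa.resolve_left (by omega)
    obtain ⟨τ, hτ, hτg⟩ := hga.resolve_left (by omega)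
    refine ⟨τ * σ, mul_mem hτ hσ, fun x a hxa => ?_⟩
    obtain ⟨m, hm, ha⟩ := pmul_eq_some.1 hxa
    rw [Perm.mul_apply, hσf x m hm, hτg m a ha]
  one_mem' := by
    refine ⟨.inl fun x y a b hx hy hxy => ?_, fun x y a hx hy => ?_, .inr ⟨1, one_mem _, ?_⟩⟩
    · cases hx; cases hy; exact hxy
    · cases hx; cases hy; rfl
    · rintro x a ⟨⟩; rfl

theorem Equiv.Perm.eq_of_forall_ne {α : Type*} {σ τ : Perm α} (i : α)
    (h : ∀ x, x ≠ i → σ x = τ x) : σ = τ := by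
  ext x
  by_cases hx : x = i
  · subst hx
    by_contra hne
    have hσy : σ (σ.symm (τ x)) = τ x := σ.apply_symm_apply _
    have hy : σ.symm (τ x) ≠ x := fun hyx => hne (by rwa [hyx] at hσy)
    exact hy (τ.injective ((h _ hy).symm.trans hσy))
  · exact h x hx

theorem Fin.val_cycleRange {i x : Fin n} :
    (Fin.cycleRange i x : ℕ) =
      if (x : ℕ) < i then (x : ℕ) + 1 else if (x : ℕ) = i then 0 else x := by
  rcases lt_or_ge i x with h | h
  · rw [Fin.cycleRange_of_gt h, if_neg (by omega), if_neg (by omega)]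
  · rw [Fin.coe_cycleRange_of_le h]
    simp only [Fin.ext_iff]
    split_ifs <;> omega

theorem extendsTo_opBij (i j : Fin n) :
    extendsTo ((Fin.cycleRange j)⁻¹ * Fin.cycleRange i) (opBij i j) := by
  intro x a hxa
  obtain ⟨hx, ha⟩ := opBij_eq_some.1 hxa
  rw [Perm.mul_apply, Perm.inv_eq_iff_eq, Fin.ext_iff, Fin.val_cycleRange, Fin.val_cycleRange]
  rw [ne_eq, Fin.ext_iff] at hx
  unfold opBijVal at ha
  split_ifs at ha ⊢ <;> omega

theorem opBij_mem_AM_iff (i j : Fin n) : opBij i j ∈ AM n ↔ (i + j : ℕ) % 2 = 0 := by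
  have hsign : Perm.sign ((Fin.cycleRange j)⁻¹ * Fin.cycleRange i) = (-1) ^ (i + j : ℕ) := by
    rw [map_mul, Perm.sign_inv, Fin.sign_cycleRange, Fin.sign_cycleRange, ← pow_add, add_comm]
  have heven : ((-1 : ℤˣ) ^ (i + j : ℕ) = 1) ↔ (i + j : ℕ) % 2 = 0 := by
    rw [neg_one_pow_eq_one_iff_even (by decide), Nat.even_iff]
  constructor
  · rintro ⟨-, -, hAI⟩
    have := prank_opBij i j
    have := i.isLt
    obtain ⟨σ, hσ, hσf⟩ := hAI.resolve_left (by omega)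
    have hσ_eq : σ = (Fin.cycleRange j)⁻¹ * Fin.cycleRange i := by
      refine Perm.eq_of_forall_ne i fun x hx => ?_
      obtain ⟨a, ha⟩ := mem_pDom.1 ((isOrderIsoOn_opBij i j).dom ▸ Finset.mem_erase.2
        ⟨hx, Finset.mem_univ x⟩ : x ∈ pDom (opBij i j))
      rw [hσf x a ha, extendsTo_opBij i j x a ha]
    rwa [Perm.mem_alternatingGroup, hσ_eq, hsign, heven] at hσ
  · intro h
    refine ⟨.inl (isOrderIsoOn_opBij i j).mono, (isOrderIsoOn_opBij i j).inj,
      .inr ⟨_, ?_, extendsTo_opBij i j⟩⟩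
    rwa [Perm.mem_alternatingGroup, hsign, heven]

theorem exists_perm_reverse (n : ℕ) :
    ∃ σ : Perm (Fin n), Perm.sign σ = (-1) ^ (∑ t ∈ Finset.range n, t) ∧ ∀ x, σ x = x.rev := by
  -- The reversal of `{0, …, k}` is `cycleRange k` after the reversal of `{0, …, k - 1}`.
  suffices h : ∀ k ≤ n, ∃ σ : Perm (Fin n), Perm.sign σ = (-1) ^ (∑ t ∈ Finset.range k, t) ∧
      ∀ x : Fin n, (σ x : ℕ) = if (x : ℕ) < k then k - 1 - x else x by
    obtain ⟨σ, hσ, hσx⟩ := h n le_rfl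
    refine ⟨σ, hσ, fun x => Fin.ext ?_⟩
    rw [hσx, if_pos x.isLt, Fin.val_rev]
    omega
  intro k
  induction k with
  | zero => exact fun _ => ⟨1, by simp, fun x => by simp⟩
  | succ k ih =>
    intro hk
    obtain ⟨σ, hσ, hσx⟩ := ih (by omega)
    refine ⟨Fin.cycleRange ⟨k, by omega⟩ * σ, ?_, fun x => ?_⟩
    · rw [map_mul, hσ, Fin.sign_cycleRange, Finset.sum_range_succ, pow_add, mul_comm]
    · rw [Perm.mul_apply, Fin.val_cycleRange, hσx]
      split_ifs <;> simp_all <;> omega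

theorem hPT_mem_AM (h4 : n % 4 = 0) : hPT n ∈ AM n := by
  obtain ⟨σ, hσ, hσx⟩ := exists_perm_reverse n
  refine ⟨.inr orderRev_hPT, pInj_hPT, .inr ⟨σ, ?_, fun x a hxa => ?_⟩⟩
  · rw [Perm.mem_alternatingGroup, hσ, neg_one_pow_eq_one_iff_even (by decide), Nat.even_iff]
    have hsum := Finset.sum_range_id_mul_two n
    obtain ⟨m, rfl⟩ : ∃ m, n = 4 * m := ⟨n / 4, by omega⟩
    rw [show 4 * m * (4 * m - 1) = 2 * (2 * (m * (4 * m - 1))) by ring] at hsum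
    omega
  · rw [hσx]
    exact Option.some.inj hxa

end Alternating

section Sorting

variable {S : Submonoid (PT n)} {f : PT n} {A B : Finset (Fin n)}

theorem pidOn_mem (hS : ∀ i j : Fin n, (i + j : ℕ) % 2 = 0 → opBij i j ∈ S)
    (A : Finset (Fin n)) : pidOn A ∈ S := by
  suffices h : ∀ B : Finset (Fin n), pidOn Bᶜ ∈ S by simpa using h Aᶜ
  intro B
  induction B using Finset.induction_on with
  | empty => simp [pidOn_univ]
  | insert a B _ ih =>
    have hcompl : (insert a B)ᶜ = Bᶜ ∩ Finset.univ.erase a := by ext; simp [and_comm]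
    rw [hcompl, pidOn_inter, ← opBij_self]
    exact mul_mem ih (hS a a (by omega))

theorem sum_pIm (hf : pInj f) : ∑ b ∈ pIm f, (b : ℕ) = ∑ x ∈ pDom f, ((f x).getD x : ℕ) := by
  rw [pIm_eq_image, Finset.sum_image hf.injOn_getD]

theorem pidOn_mul_apply_of_mem {x : Fin n} (hx : x ∈ A) (f : PT n) : (pidOn A * f) x = f x := by
  simp [pmul_apply, pidOn, hx]

theorem exists_notMem_lt_of_not_isLowerSet (hA : A.card + 2 ≤ n)
    (hlow : ¬IsLowerSet (A : Set (Fin n))) : ∃ y ∉ A, (y : ℕ) + 2 < n ∧ ∃ x ∈ A, y < x := by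
  simp only [IsLowerSet, Finset.mem_coe, not_forall] at hlow
  obtain ⟨a, b, hba, haA, hbA⟩ := hlow
  have hba' : b < a := lt_of_le_of_ne hba fun h => hbA (h ▸ haA)
  by_cases hb : (b : ℕ) + 2 < n
  · exact ⟨b, hbA, hb, a, haA, hba'⟩
  · have hcard : 1 < Aᶜ.card := by rw [Finset.card_compl, Fintype.card_fin]; omega
    obtain ⟨y, hy, hyb⟩ := Finset.exists_mem_ne hcard b
    rw [Finset.mem_compl] at hy
    have hya : y ≠ a := fun h => hy (h ▸ haA)
    rw [ne_eq, Fin.ext_iff] at hyb hya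
    rw [Fin.lt_def] at hba'
    have := a.isLt
    have := y.isLt
    exact ⟨y, hy, by omega, a, haA, Fin.lt_def.2 (by omega)⟩

theorem exists_gap (hA : A.card + 2 ≤ n) (hlow : ¬IsLowerSet (A : Set (Fin n))) :
    ∃ j c : Fin n, j ∉ A ∧ (c : ℕ) = j + 2 ∧ ∃ x ∈ A, j < x ∧ x ≤ c := by
  set T := Finset.univ.filter fun y : Fin n => y ∉ A ∧ (y : ℕ) + 2 < n ∧ ∃ x ∈ A, y < x
  have hT : T.Nonempty := by
    obtain ⟨y, hy⟩ := exists_notMem_lt_of_not_isLowerSet hA hlow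
    exact ⟨y, by simpa [T] using hy⟩
  -- For the largest such `j`, one of `j + 1`, `j + 2` lies in `A`, else `j + 1` would qualify.
  obtain ⟨j, hjT, hjmax⟩ := T.exists_max_image id hT
  simp only [T, Finset.mem_filter, Finset.mem_univ, true_and] at hjT
  obtain ⟨hjA, hjn, x, hxA, hjx⟩ := hjT
  refine ⟨j, ⟨j + 2, hjn⟩, hjA, rfl, ?_⟩
  by_contra hno
  simp only [not_exists, not_and, not_le] at hno
  have hx := hno x hxA hjx
  rw [Fin.lt_def] at hjx hx
  simp only at hx
  have hj1 : (⟨j + 1, by omega⟩ : Fin n) ∈ T := by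
    simp only [T, Finset.mem_filter, Finset.mem_univ, true_and]
    refine ⟨fun h => ?_, by omega, x, hxA, Fin.lt_def.2 (by simp only; omega)⟩
    have := hno _ h (Fin.lt_def.2 (by simp only; omega))
    rw [Fin.lt_def] at this
    simp only at this
    omega
  have := hjmax _ hj1
  rw [id, id, Fin.le_def] at this
  simp only at this
  omega

theorem exists_mem_isOrderIsoOn_sum_lt_left
    (hS : ∀ i j : Fin n, (i + j : ℕ) % 2 = 0 → opBij i j ∈ S) {j c x : Fin n}
    (hjA : j ∉ A) (hc : (c : ℕ) = j + 2) (hxA : x ∈ A) (hjx : j < x) (hxc : x ≤ c) :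
    ∃ g ∈ S, ∃ A', IsOrderIsoOn g A A' ∧ ∑ y ∈ A', (y : ℕ) < ∑ y ∈ A, (y : ℕ) := by
  have hj := isOrderIsoOn_opBij j c
  have hg : IsOrderIsoOn (pidOn A * opBij j c) A (pIm (pidOn A * opBij j c)) :=
    ⟨(isOrderIsoOn_pidOn A).mono.mul hj.mono, (isOrderIsoOn_pidOn A).inj.mul hj.inj,
      by rw [pDom_pidOn_mul, hj.dom]; ext y; simp; rintro hy rfl; exact hjA hy, rfl⟩
  refine ⟨_, mul_mem (pidOn_mem hS A) (hS j c (by omega)), _, hg, ?_⟩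
  rw [sum_pIm hg.inj, hg.dom]
  have hval : ∀ y ∈ A, (((pidOn A * opBij j c) y).getD y : ℕ) = opBijVal j c y := by
    intro y hy
    have hyj : y ≠ j := fun h => hjA (h ▸ hy)
    rw [pidOn_mul_apply_of_mem hy, opBij_apply, if_neg hyj, Option.getD_some]
  rw [Fin.lt_def] at hjx
  rw [Fin.le_def] at hxc
  refine Finset.sum_lt_sum (fun y hy => ?_) ⟨x, hxA, ?_⟩
  · have hyj : (y : ℕ) ≠ j := fun h => hjA (Fin.ext h ▸ hy)
    rw [hval y hy]; unfold opBijVal; split_ifs <;> omega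
  · rw [hval x hxA]; unfold opBijVal; split_ifs <;> omega

theorem exists_mem_isOrderIsoOn_sum_lt_right
    (hS : ∀ i j : Fin n, (i + j : ℕ) % 2 = 0 → opBij i j ∈ S) {j c x : Fin n}
    (hjB : j ∉ B) (hc : (c : ℕ) = j + 2) (hxB : x ∈ B) (hjx : j < x) (hxc : x ≤ c) :
    ∃ g ∈ S, ∃ B', IsOrderIsoOn g B' B ∧ ∑ y ∈ B', (y : ℕ) < ∑ y ∈ B, (y : ℕ) := by
  have hj := isOrderIsoOn_opBij c j
  have hg : IsOrderIsoOn (opBij c j * pidOn B) (pDom (opBij c j * pidOn B)) B :=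
    ⟨hj.mono.mul (isOrderIsoOn_pidOn B).mono, hj.inj.mul (isOrderIsoOn_pidOn B).inj, rfl,
      by rw [pIm_mul_pidOn, hj.im]; ext y; simp; rintro hy rfl; exact hjB hy⟩
  refine ⟨_, mul_mem (hS c j (by omega)) (pidOn_mem hS B), _, hg, ?_⟩
  conv_rhs => rw [← hg.im, sum_pIm hg.inj]
  rw [Fin.lt_def] at hjx
  rw [Fin.le_def] at hxc
  have hval : ∀ y ∈ pDom (opBij c j * pidOn B),
      ∃ a, (opBij c j * pidOn B) y = some a ∧ (a : ℕ) = opBijVal c j y ∧ (y : ℕ) ≠ c := by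
    intro y hy
    obtain ⟨a, ha⟩ := mem_pDom.1 hy
    obtain ⟨m, hm, hma⟩ := pmul_eq_some.1 ha
    obtain ⟨hyc, hmv⟩ := opBij_eq_some.1 hm
    obtain ⟨-, rfl⟩ := pidOn_eq_some.1 hma
    exact ⟨m, ha, hmv, fun h => hyc (Fin.ext h)⟩
  have hx' : (opBij c j * pidOn B) ⟨x - 1, by omega⟩ = some x := by
    refine pmul_eq_some.2 ⟨x, opBij_eq_some.2 ⟨fun h => ?_, ?_⟩, pidOn_eq_some.2 ⟨hxB, rfl⟩⟩
    · rw [Fin.ext_iff] at h; simp only at h; omega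
    · unfold opBijVal; simp only; split_ifs <;> omega
  refine Finset.sum_lt_sum (fun y hy => ?_) ⟨_, mem_pDom.2 ⟨x, hx'⟩, ?_⟩
  · obtain ⟨a, ha, hav, hyc⟩ := hval y hy
    rw [ha, Option.getD_some, hav]; unfold opBijVal; split_ifs <;> omega
  · rw [hx', Option.getD_some]; simp only; omega

theorem exists_mem_isOrderIsoOn (hS : ∀ i j : Fin n, (i + j : ℕ) % 2 = 0 → opBij i j ∈ S)
    (A B : Finset (Fin n)) (hAB : A.card = B.card) (hA : A.card + 2 ≤ n) :
    ∃ f ∈ S, IsOrderIsoOn f A B := by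
  induction hN : ∑ y ∈ A, (y : ℕ) + ∑ y ∈ B, (y : ℕ) using Nat.strong_induction_on
    generalizing A B with
  | _ N ih =>
  by_cases hlowA : IsLowerSet (A : Set (Fin n))
  · by_cases hlowB : IsLowerSet (B : Set (Fin n))
    · rw [← Finset.eq_of_isLowerSet_of_card_eq hlowA hlowB hAB]
      exact ⟨pidOn A, pidOn_mem hS A, isOrderIsoOn_pidOn A⟩
    · obtain ⟨j, c, hjB, hc, x, hxB, hjx, hxc⟩ := exists_gap (hAB ▸ hA) hlowB
      obtain ⟨g, hgS, B', hg, hsum⟩ :=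
        exists_mem_isOrderIsoOn_sum_lt_right hS hjB hc hxB hjx hxc
      obtain ⟨f, hfS, hf⟩ := ih _ (by omega) A B' (hAB.trans hg.card_eq.symm) hA rfl
      exact ⟨f * g, mul_mem hfS hgS, hf.mul hg⟩
  · obtain ⟨j, c, hjA, hc, x, hxA, hjx, hxc⟩ := exists_gap hA hlowA
    obtain ⟨g, hgS, A', hg, hsum⟩ := exists_mem_isOrderIsoOn_sum_lt_left hS hjA hc hxA hjx hxc
    obtain ⟨f, hfS, hf⟩ := ih _ (by omega) A' B (hg.card_eq.symm.trans hAB)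
      (hg.card_eq ▸ hA) rfl
    exact ⟨g * f, mul_mem hgS hfS, hg.mul hf⟩

end Sorting

section OrderPreserving

variable {S : Submonoid (PT n)} {f : PT n}

theorem Finset.exists_eq_univ_erase {A : Finset (Fin n)} (hA : A.card + 1 = n) :
    ∃ i, A = Finset.univ.erase i := by
  obtain ⟨i, hi⟩ := Finset.card_eq_one.1 (by rw [Finset.card_compl, Fintype.card_fin]; omega :
    Aᶜ.card = 1)
  exact ⟨i, by rw [← Finset.compl_singleton, ← hi, compl_compl]⟩

theorem eq_one_of_prank_eq (hmono : orderPres f) (hinj : pInj f) (hr : prank f = n) : f = 1 := by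
  have hf : IsOrderIsoOn f (pDom f) (pIm f) := ⟨hmono, hinj, rfl, rfl⟩
  have hdom : pDom f = Finset.univ := Finset.eq_univ_of_card _ (by simpa [prank] using hr)
  have him : pIm f = Finset.univ :=
    Finset.eq_univ_of_card _ (by rw [← hf.card_eq]; simpa [prank] using hr)
  rw [hdom, him] at hf
  exact pidOn_univ (n := n) ▸ hf.unique (isOrderIsoOn_pidOn _)

theorem exists_eq_opBij (hmono : orderPres f) (hinj : pInj f) (hr : prank f + 1 = n) :
    ∃ i j, f = opBij i j := by
  have hf : IsOrderIsoOn f (pDom f) (pIm f) := ⟨hmono, hinj, rfl, rfl⟩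
  obtain ⟨i, hi⟩ := Finset.exists_eq_univ_erase hr
  obtain ⟨j, hj⟩ := Finset.exists_eq_univ_erase (hf.card_eq ▸ hr : (pIm f).card + 1 = n)
  rw [hi, hj] at hf
  exact ⟨i, j, hf.unique (isOrderIsoOn_opBij i j)⟩

theorem mem_of_orderPres (hS : ∀ i j : Fin n, (i + j : ℕ) % 2 = 0 → opBij i j ∈ S)
    (hf : f ∈ AM n) (hmono : orderPres f) : f ∈ S := by
  have hinj := hf.2.1
  have hle := prank_le f
  rcases (by omega : prank f = n ∨ prank f + 1 = n ∨ prank f + 2 ≤ n) with hr | hr | hr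
  · rw [eq_one_of_prank_eq hmono hinj hr]
    exact S.one_mem
  · obtain ⟨i, j, rfl⟩ := exists_eq_opBij hmono hinj hr
    exact hS i j ((opBij_mem_AM_iff i j).1 hf)
  · obtain ⟨g, hgS, hg⟩ := exists_mem_isOrderIsoOn hS (pDom f) (pIm f)
      (IsOrderIsoOn.card_eq ⟨hmono, hinj, rfl, rfl⟩) hr
    rwa [(⟨hmono, hinj, rfl, rfl⟩ : IsOrderIsoOn f (pDom f) (pIm f)).unique hg]

theorem AM_subset (h4 : n % 4 = 0) (hS : ∀ i j : Fin n, (i + j : ℕ) % 2 = 0 → opBij i j ∈ S)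
    (hh : hPT n ∈ S) : AM n ⊆ S := by
  intro f hf
  rcases hf.1 with hmono | hrev
  · exact mem_of_orderPres hS hf hmono
  · have hhf : hPT n * f ∈ AM n := (AMSubmonoid n).mul_mem (hPT_mem_AM h4) hf
    have := mul_mem hh (mem_of_orderPres hS hhf (orderRev_hPT.mul hrev))
    rwa [← mul_assoc, hPT_mul_hPT, one_mul] at this

theorem eq_one_or_eq_hPT (hf : f ∈ AM n) (hr : prank f = n) : f = 1 ∨ f = hPT n := by
  rcases hf.1 with hmono | hrev
  · exact .inl (eq_one_of_prank_eq hmono hf.2.1 hr)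
  · have h1 := eq_one_of_prank_eq (orderRev_hPT.mul hrev) (pInj_hPT.mul hf.2.1)
      (by rw [prank_hPT_mul, hr])
    right
    rw [← one_mul f, ← hPT_mul_hPT, mul_assoc, h1, mul_one]

end OrderPreserving

section Links

variable {S : Submonoid (PT n)}

def Links (S : Submonoid (PT n)) (a b : ℕ) : Prop :=
  ∃ i j : Fin n, (i : ℕ) = a ∧ (j : ℕ) = b ∧ opBij i j ∈ S

theorem Links.trans {a b c : ℕ} (hab : Links S a b) (hbc : Links S b c) : Links S a c := by
  obtain ⟨i, k, rfl, rfl, hik⟩ := hab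
  obtain ⟨k', j, hk, rfl, hkj⟩ := hbc
  obtain rfl := Fin.ext hk
  exact ⟨i, j, rfl, rfl, opBij_mul_opBij i k' j ▸ mul_mem hik hkj⟩

theorem Links.rev (hh : hPT n ∈ S) {a b a' b' : ℕ} (ha : a + a' + 1 = n) (hb : b + b' + 1 = n)
    (h : Links S a b) : Links S a' b' := by
  obtain ⟨i, j, rfl, rfl, hij⟩ := h
  refine ⟨i.rev, j.rev, by rw [Fin.val_rev]; omega, by rw [Fin.val_rev]; omega, ?_⟩
  rw [← hPT_mul_opBij_mul_hPT]
  exact mul_mem (mul_mem hh hij) hh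

theorem Links.mem {i j : Fin n} (h : Links S i j) : opBij i j ∈ S := by
  obtain ⟨i', j', hi, hj, h⟩ := h
  rwa [Fin.ext hi, Fin.ext hj] at h

theorem xg_eq_opBij (hn : 2 ≤ n) {a : ℕ} (h3 : 3 ≤ a) (ha : a ≤ n) :
    xg n hn a = opBij ⟨a - 1, by omega⟩ ⟨a - 3, by omega⟩ := by
  unfold xg
  rw [dif_pos ⟨h3, ha⟩]

theorem descChain_succ (hn : 2 ≤ n) (b m : ℕ) :
    descChain n hn b (m + 1) = xg n hn (b + 2 * m) * descChain n hn b m := by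
  simp [descChain, List.range_succ]

theorem exists_descChain_eq (hn : 2 ≤ n) {b : ℕ} (hb : 3 ≤ b) : ∀ m, b + 2 * m ≤ n →
    ∃ i j : Fin n, (i : ℕ) = b + 2 * m - 1 ∧ (j : ℕ) = b - 3 ∧
      descChain n hn b (m + 1) = opBij i j
  | 0, h => ⟨⟨b - 1, by omega⟩, ⟨b - 3, by omega⟩, rfl, rfl, by
    simp [descChain, xg_eq_opBij hn hb h]⟩
  | m + 1, h => by
    obtain ⟨i, j, hi, hj, hchain⟩ := exists_descChain_eq hn hb m (by omega)
    refine ⟨⟨b + 2 * (m + 1) - 1, by omega⟩, j, rfl, hj, ?_⟩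
    rw [descChain_succ, hchain, xg_eq_opBij hn (by omega) h,
      show (⟨b + 2 * (m + 1) - 3, _⟩ : Fin n) = i from Fin.ext (by rw [Fin.val_mk]; omega),
      opBij_mul_opBij]

theorem links_xg (hn : 2 ≤ n) {a b : ℕ} (hab : b + 2 = a) (h1 : n / 2 + 2 ≤ a) (h2 : a < n) :
    Links (Submonoid.closure (AMgens0 n hn)) a b := by
  have hx : xg n hn (a + 1) ∈ Submonoid.closure (AMgens0 n hn) :=
    Submonoid.subset_closure (.inr (.inl ⟨a + 1, by omega, h2, rfl⟩))
  rw [xg_eq_opBij hn (by omega) h2] at hx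
  exact ⟨_, _, by rw [Fin.val_mk]; omega, by rw [Fin.val_mk]; omega, hx⟩

theorem links_descChain (hn : 2 ≤ n) (h4 : n % 4 = 0) {e a : ℕ} (he : e ≤ 1)
    (ha : a = n / 2 + e) : Links (Submonoid.closure (AMgens0 n hn)) a e := by
  obtain ⟨i, j, hi, hj, hchain⟩ := exists_descChain_eq hn (b := 3 + e) (by omega) (n / 4 - 1)
    (by omega)
  refine ⟨i, j, by omega, by omega, hchain ▸ Submonoid.subset_closure ?_⟩
  rw [show n / 4 - 1 + 1 = n / 4 by omega]
  rcases (by omega : e = 0 ∨ e = 1) with rfl | rfl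
  exacts [.inr (.inr (.inr rfl)), .inr (.inr (.inl rfl))]

theorem hPT_mem_closure (hn : 2 ≤ n) : hPT n ∈ Submonoid.closure (AMgens0 n hn) :=
  Submonoid.subset_closure (.inl rfl)

/-- For `4 ∣ n`, `p ↦ vtx n e p` (`p < n/2`) lists the points of parity `e` in the cyclic order
`e, e+2, …, n/2-2+e, n-2+e, n-4+e, …, n/2+e`: consecutive points are joined by the `x_i` (upper
half), their conjugates by `h` (lower half), and the two long products and their conjugates
(between the halves). -/
def vtx (n e p : ℕ) : ℕ := if p < n / 4 then 2 * p + e else n - 2 + e - 2 * (p - n / 4)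

theorem exists_vtx (h4 : n % 4 = 0) {v : ℕ} (hv : v < n) : ∃ p < n / 2, vtx n (v % 2) p = v :=
  ⟨if v < n / 2 then v / 2 else n / 4 + (n - 1 - v) / 2, by split_ifs <;> omega,
    by unfold vtx; split_ifs <;> omega⟩

theorem links_vtx_succ (hn : 2 ≤ n) (h4 : n % 4 = 0) {e p : ℕ} (he : e ≤ 1) (hp : p + 1 < n / 2) :
    Links (Submonoid.closure (AMgens0 n hn)) (vtx n e p) (vtx n e (p + 1)) := by
  have hh := hPT_mem_closure hn
  unfold vtx
  by_cases h1 : p + 1 < n / 4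
  · rw [if_pos (by omega), if_pos h1]
    exact (links_xg hn (a := n - 1 - 2 * p - e) (b := n - 3 - 2 * p - e) (by omega) (by omega)
      (by omega)).rev hh (by omega) (by omega)
  · rw [if_neg h1]
    by_cases h2 : p + 1 = n / 4
    · rw [if_pos (by omega)]
      exact (links_descChain hn h4 (e := 1 - e) (by omega) rfl).rev hh (by omega) (by omega)
    · rw [if_neg (by omega)]
      exact links_xg hn (by omega) (by omega) (by omega)

theorem links_vtx_zero (hn : 2 ≤ n) (h4 : n % 4 = 0) {e : ℕ} (he : e ≤ 1) :
    Links (Submonoid.closure (AMgens0 n hn)) (vtx n e (n / 2 - 1)) (vtx n e 0) := by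
  rw [show vtx n e 0 = e by unfold vtx; split_ifs <;> omega]
  exact links_descChain hn h4 he (by unfold vtx; split_ifs <;> omega)

theorem links_vtx_of_lt (hn : 2 ≤ n) (h4 : n % 4 = 0) {e p q : ℕ} (he : e ≤ 1) (hpq : p < q)
    (hq : q < n / 2) : Links (Submonoid.closure (AMgens0 n hn)) (vtx n e p) (vtx n e q) := by
  induction q, hpq using Nat.le_induction with
  | base => exact links_vtx_succ hn h4 he hq
  | succ q hpq ih => exact (ih (by omega)).trans (links_vtx_succ hn h4 he hq)

theorem links_vtx (hn : 2 ≤ n) (h4 : n % 4 = 0) {e p q : ℕ} (he : e ≤ 1) (hp : p < n / 2)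
    (hq : q < n / 2) : Links (Submonoid.closure (AMgens0 n hn)) (vtx n e p) (vtx n e q) := by
  have hp0 : Links (Submonoid.closure (AMgens0 n hn)) (vtx n e p) (vtx n e 0) := by
    rcases (by omega : p = n / 2 - 1 ∨ p < n / 2 - 1) with rfl | hp'
    · exact links_vtx_zero hn h4 he
    · exact (links_vtx_of_lt hn h4 he hp' (by omega)).trans (links_vtx_zero hn h4 he)
  rcases (by omega : p < q ∨ q = 0 ∨ 0 < q) with hpq | rfl | hq0
  · exact links_vtx_of_lt hn h4 he hpq hq
  · exact hp0
  · exact hp0.trans (links_vtx_of_lt hn h4 he hq0 hq)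

end Links

section Closure

theorem opBij_mem_closure (hn : 2 ≤ n) (h4 : n % 4 = 0) (i j : Fin n)
    (hij : (i + j : ℕ) % 2 = 0) : opBij i j ∈ Submonoid.closure (AMgens0 n hn) := by
  obtain ⟨p, hp, hpi⟩ := exists_vtx h4 i.isLt
  obtain ⟨q, hq, hqj⟩ := exists_vtx h4 j.isLt
  rw [show (j : ℕ) % 2 = i % 2 by omega] at hqj
  exact Links.mem (hpi ▸ hqj ▸ links_vtx hn h4 (by omega) hp hq)

theorem AMgens0_subset_AM (hn : 2 ≤ n) (h4 : n % 4 = 0) : AMgens0 n hn ⊆ AM n := by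
  have hchain : ∀ b, 3 ≤ b → b ≤ 4 → descChain n hn b (n / 4) ∈ AM n := by
    intro b hb3 hb4
    obtain ⟨i, j, hi, hj, hchain⟩ := exists_descChain_eq hn hb3 (n / 4 - 1) (by omega)
    rw [show n / 4 = n / 4 - 1 + 1 by omega, hchain, opBij_mem_AM_iff]
    omega
  rintro f (rfl | ⟨i, hi, hin, rfl⟩ | rfl | rfl)
  · exact hPT_mem_AM h4
  · rw [xg_eq_opBij hn (by omega) hin, opBij_mem_AM_iff]
    simp only
    omega
  · exact hchain 4 (by norm_num) le_rfl
  · exact hchain 3 le_rfl (by norm_num)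

theorem closure_AMgens0 (hn : 2 ≤ n) (h4 : n % 4 = 0) :
    (Submonoid.closure (AMgens0 n hn) : Set (PT n)) = AM n :=
  le_antisymm (Submonoid.closure_le (S := AMSubmonoid n) |>.2 (AMgens0_subset_AM hn h4))
    (AM_subset h4 (opBij_mem_closure hn h4) (hPT_mem_closure hn))

end Closure

section LowerBound

variable {G : Set (PT n)}

theorem hPT_mem_of_closure_eq (hn : 2 ≤ n) (h4 : n % 4 = 0)
    (hG : (Submonoid.closure G : Set (PT n)) = AM n) : hPT n ∈ G := by
  have key : ∀ f ∈ Submonoid.closure G, prank f = n → f = 1 ∨ hPT n ∈ G := by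
    intro f hf
    induction hf using Submonoid.closure_induction_left with
    | one => exact fun _ => .inl rfl
    | mul_left g hg f hf ih =>
      intro hr
      have hgAM : g ∈ AM n := hG ▸ Submonoid.subset_closure hg
      have := prank_mul_le_left g f
      have := prank_mul_le_right hgAM.2.1 f
      have := prank_le g
      have := prank_le f
      rcases eq_one_or_eq_hPT hgAM (by omega) with rfl | rfl
      · rw [one_mul]; exact ih (by omega)
      · exact .inr hg
  have hh : hPT n ∈ Submonoid.closure G := by rw [← SetLike.mem_coe, hG]; exact hPT_mem_AM h4
  exact (key _ hh prank_hPT).resolve_left (hPT_ne_one hn)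

theorem exists_mem_pDom_eq_erase (hG : (Submonoid.closure G : Set (PT n)) = AM n) (i : Fin n) :
    ∃ g ∈ G, pDom g = Finset.univ.erase i ∨ pDom g = Finset.univ.erase i.rev := by
  have key : ∀ f ∈ Submonoid.closure G, ∀ i, pDom f = Finset.univ.erase i →
      ∃ g ∈ G, pDom g = Finset.univ.erase i ∨ pDom g = Finset.univ.erase i.rev := by
    intro f hf
    induction hf using Submonoid.closure_induction_left with
    | one => intro i hi; simpa [pDom_one] using congrArg (i ∈ ·) hi
    | mul_left g hg f hf ih =>
      intro i hi
      have hgAM : g ∈ AM n := hG ▸ Submonoid.subset_closure hg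
      by_cases hr : prank g = n
      · rcases eq_one_or_eq_hPT hgAM hr with rfl | rfl
        · rw [one_mul] at hi; exact ih i hi
        · have hf' : pDom f = Finset.univ.erase i.rev := by
            ext x
            have := congrArg (x.rev ∈ ·) hi
            simpa [mem_pDom_hPT_mul, Fin.rev_eq_iff] using this
          obtain ⟨g', hg', h'⟩ := ih i.rev hf'
          exact ⟨g', hg', by rwa [Fin.rev_rev, or_comm] at h'⟩
      · refine ⟨g, hg, .inl (Finset.eq_of_subset_of_card_le (hi ▸ pDom_mul_subset g f) ?_).symm⟩
        have := prank_le g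
        rw [Finset.card_erase_of_mem (Finset.mem_univ i), Finset.card_univ, Fintype.card_fin]
        exact Nat.le_sub_one_of_lt (lt_of_le_of_ne this hr)
  have hi : opBij i i ∈ Submonoid.closure G := by
    rw [← SetLike.mem_coe, hG, opBij_mem_AM_iff]; omega
  exact key _ hi i (isOrderIsoOn_opBij i i).dom

theorem le_ncard_of_closure_eq (hn : 2 ≤ n) (h4 : n % 4 = 0)
    (hG : (Submonoid.closure G : Set (PT n)) = AM n) : n / 2 + 1 ≤ G.ncard := by
  choose g hgG hg using exists_mem_pDom_eq_erase hG
  set D := Finset.Iio (⟨n / 2, by omega⟩ : Fin n)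
  have hinj : Set.InjOn g D := by
    intro i hi i' hi' hii'
    simp only [D, Finset.coe_Iio, Set.mem_Iio, Fin.lt_def] at hi hi'
    have hrev : ∀ j : Fin n, (j : ℕ) < n / 2 → n / 2 ≤ j.rev := fun j hj => by
      rw [Fin.val_rev]; omega
    rcases hg i with h | h <;> rcases hg i' with h' | h' <;> rw [hii', h'] at h <;>
      have := (Finset.erase_inj _ (Finset.mem_univ _)).1 h
    · exact this.symm
    · exact absurd (this ▸ hrev i' hi') (by omega)
    · exact absurd (this ▸ hrev i hi) (by omega)
    · exact Fin.rev_injective this.symm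
  have hh : hPT n ∉ D.image g := by
    simp only [Finset.mem_image, not_exists, not_and]
    intro i _ hi
    have hr : prank (g i) = n := hi ▸ prank_hPT
    rcases hg i with h | h <;>
      rw [prank, h, Finset.card_erase_of_mem (Finset.mem_univ _), Finset.card_univ,
        Fintype.card_fin] at hr <;> omega
  calc n / 2 + 1 = (insert (hPT n) (D.image g)).card := by
        rw [Finset.card_insert_of_notMem hh, Finset.card_image_of_injOn hinj, Fin.card_Iio]
    _ = (↑(insert (hPT n) (D.image g)) : Set (PT n)).ncard := (Set.ncard_coe_finset _).symm
    _ ≤ G.ncard := Set.ncard_le_ncard (by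
        simp only [Finset.coe_insert, Finset.coe_image, Set.insert_subset_iff, Set.image_subset_iff]
        exact ⟨hPT_mem_of_closure_eq hn h4 hG, fun i _ => hgG i⟩)

theorem ncard_AMgens0_le (hn : 2 ≤ n) (h4 : n % 4 = 0) : (AMgens0 n hn).ncard ≤ n / 2 + 1 := by
  have hsub : AMgens0 n hn ⊆ insert (hPT n) (insert (descChain n hn 4 (n / 4))
      (insert (descChain n hn 3 (n / 4)) (xg n hn '' Set.Icc (n / 2 + 3) n))) := by
    rintro f (rfl | ⟨i, hi, hin, rfl⟩ | rfl | rfl)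
    · exact .inl rfl
    · exact .inr (.inr (.inr ⟨i, ⟨hi, hin⟩, rfl⟩))
    · exact .inr (.inl rfl)
    · exact .inr (.inr (.inl rfl))
  calc (AMgens0 n hn).ncard ≤ _ := Set.ncard_le_ncard hsub (Set.toFinite _)
    _ ≤ (xg n hn '' Set.Icc (n / 2 + 3) n).ncard + 3 := by
        grw [Set.ncard_insert_le, Set.ncard_insert_le, Set.ncard_insert_le]
    _ ≤ (Set.Icc (n / 2 + 3) n).ncard + 3 := by grw [Set.ncard_image_le (Set.finite_Icc _ _)]
    _ ≤ n / 2 + 1 := by simp; omega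

end LowerBound

end

/-- for `n ≡ 0 (mod 4)`, the displayed set of size `n/2 + 1` generates
`AM_n`, and no smaller set does; hence `AM_n` has rank `n/2 + 1`. -/
theorem stmt18 {n : ℕ} (hn : 2 ≤ n) (h4 : n % 4 = 0) :
    (Submonoid.closure (AMgens0 n hn) : Set (PT n)) = AM n ∧
      (AMgens0 n hn).ncard = n / 2 + 1 ∧
      ∀ G : Set (PT n), (Submonoid.closure G : Set (PT n)) = AM n → n / 2 + 1 ≤ G.ncard := by
  have hclosure := closure_AMgens0 hn h4
  exact ⟨hclosure, le_antisymm (ncard_AMgens0_le hn h4) (le_ncard_of_closure_eq hn h4 hclosure),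
    fun G hG => le_ncard_of_closure_eq hn h4 hG⟩
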